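/- arXiv:2502.17596 — 7 statements merged into one kernel-verified Lean document; each statement's English description precedes it below -/
import Mathlib

section
/- For every positive integer k and every finite digraph D, there is a homomorphism from D to the transitive tournament on k vertices if and only if there is no homomorphism from the directed path on k+1 vertices to D. -/
/-- Directed path on k+1 vertices has edges (i, i+1); transitive tournament on k
vertices is `Fin k` with `<`. -/
theorem stmt_0 (k : ℕ) (hk : 0 < k) (V : Type) [Fintype V] (E : V → V → Prop) :
    (∃ f : V → Fin k, ∀ u v, E u v → f u < f v) ↔
      ¬ ∃ g : Fin (k + 1) → V, ∀ i : Fin k, E (g i.castSucc) (g i.succ) := by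
  constructor
  · rintro ⟨f, hf⟩ ⟨g, hg⟩
    have key : ∀ i : Fin (k + 1), (i : ℕ) ≤ (f (g i) : ℕ) := by
      intro i
      induction i using Fin.induction with
      | zero => exact Nat.zero_le _
      | succ i ih =>
        have h1 : f (g i.castSucc) < f (g i.succ) := hf _ _ (hg i)
        have h2 : (i.castSucc : ℕ) ≤ (f (g i.castSucc) : ℕ) := ih
        simp only [Fin.coe_castSucc] at h2
        have : (i.succ : ℕ) = (i : ℕ) + 1 := rfl
        omega
    have := key (Fin.last k)
    simp only [Fin.val_last] at this
    have := (f (g (Fin.last k))).isLt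
    omega
  · intro hno
    -- S v : set of lengths of walks ending at v
    set S : V → Set ℕ := fun v => {n | ∃ h : ℕ → V,
      (∀ i < n, E (h i) (h (i + 1))) ∧ h n = v} with hS
    have h0 : ∀ v, 0 ∈ S v := fun v => ⟨fun _ => v, fun i hi => absurd hi (Nat.not_lt_zero i), rfl⟩
    have hbd : ∀ v, ∀ n ∈ S v, n < k := by
      intro v n hn
      by_contra hcon
      push_neg at hcon
      obtain ⟨h, he, _⟩ := hn
      apply hno
      refine ⟨fun i => h ((i : ℕ) + (n - k)), fun i => ?_⟩
      show E (h (((i.castSucc : Fin (k+1)) : ℕ) + (n - k))) (h (((i.succ : Fin (k+1)) : ℕ) + (n - k)))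
      have h1 : ((i.castSucc : Fin (k+1)) : ℕ) = (i : ℕ) := rfl
      have h2 : ((i.succ : Fin (k+1)) : ℕ) = (i : ℕ) + 1 := rfl
      rw [h1, h2]
      have hlt' : (i : ℕ) + (n - k) < n := by have := i.isLt; omega
      have := he _ hlt'
      convert this using 2
      omega
    have hbdd : ∀ v, BddAbove (S v) := fun v => ⟨k, fun n hn => (hbd v n hn).le⟩
    have hmem : ∀ v, sSup (S v) ∈ S v := fun v => Nat.sSup_mem ⟨0, h0 v⟩ (hbdd v)
    have hlt : ∀ v, sSup (S v) < k := fun v => hbd v _ (hmem v)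
    refine ⟨fun v => ⟨sSup (S v), hlt v⟩, fun u v huv => ?_⟩
    have : sSup (S u) + 1 ∈ S v := by
      obtain ⟨h, he, hlast⟩ := hmem u
      refine ⟨fun i => if i ≤ sSup (S u) then h i else v, fun i hi => ?_, ?_⟩
      · rcases Nat.lt_or_ge i (sSup (S u)) with h1 | h1
        · simp only [if_pos h1.le, if_pos (by omega : i + 1 ≤ sSup (S u))]
          exact he i h1
        · have hieq : i = sSup (S u) := by omega
          subst hieq
          simp only [if_pos le_rfl, if_neg (by omega : ¬ sSup (S u) + 1 ≤ sSup (S u)), hlast]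
          exact huv
      · simp only [if_neg (by omega : ¬ sSup (S u) + 1 ≤ sSup (S u))]
    have := le_csSup (hbdd v) this
    simp only [Fin.lt_def]
    omega
end

section
/- Let D be a weakly connected digraph containing no directed path on 4 vertices as a (not necessarily induced) subgraph. If D contains vertices v1, v2, v3 with edges (v1,v2), (v2,v3), (v3,v1), then D has exactly these three vertices. -/
theorem stmt_5 (V : Type) (E : V → V → Prop)
    (hconn : ∀ a b : V, Relation.ReflTransGen (fun x y => E x y ∨ E y x) a b)
    (hP4 : ¬ ∃ x1 x2 x3 x4 : V, x1 ≠ x2 ∧ x1 ≠ x3 ∧ x1 ≠ x4 ∧ x2 ≠ x3 ∧ x2 ≠ x4 ∧ x3 ≠ x4 ∧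
      E x1 x2 ∧ E x2 x3 ∧ E x3 x4)
    (v1 v2 v3 : V) (h12 : v1 ≠ v2) (h23 : v2 ≠ v3) (h31 : v3 ≠ v1)
    (e1 : E v1 v2) (e2 : E v2 v3) (e3 : E v3 v1) :
    ∀ w : V, w = v1 ∨ w = v2 ∨ w = v3 := by
  have key : ∀ x, (x = v1 ∨ x = v2 ∨ x = v3) → ∀ y, (E x y ∨ E y x) →
      (y = v1 ∨ y = v2 ∨ y = v3) := by
    intro x hx y he
    by_contra hy
    push_neg at hy
    obtain ⟨n1, n2, n3⟩ := hy
    rcases hx with rfl | rfl | rfl <;> rcases he with he | he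
    · exact hP4 ⟨v2, v3, x, y, h23, h12.symm, n2.symm, h31, n3.symm, n1.symm, e2, e3, he⟩
    · exact hP4 ⟨y, x, v2, v3, n1, n2, n3, h12, h31.symm, h23, he, e1, e2⟩
    · exact hP4 ⟨v3, v1, x, y, h31, h23.symm, n3.symm, h12, n1.symm, n2.symm, e3, e1, he⟩
    · exact hP4 ⟨y, x, v3, v1, n2, n3, n1, h23, h12.symm, h31, he, e2, e3⟩
    · exact hP4 ⟨v1, v2, x, y, h12, h31.symm, n1.symm, h23, n2.symm, n3.symm, e1, e2, he⟩
    · exact hP4 ⟨y, x, v1, v2, n3, n1, n2, h31, h23.symm, h12, he, e3, e1⟩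
  intro w
  induction hconn v1 w with
  | refl => exact Or.inl rfl
  | tail _ h ih => exact key _ ih _ h
end

section
/- Every loopless digraph that contains neither K_3 nor the directed path on 4 vertices as a subgraph admits a homomorphism to the digraph C⃗_3^{++}, which is the directed 3-cycle on vertices {1,2,3} with edges (1,2),(2,3),(3,1) together with the extra edges (1,3) and (3,2). -/
/-!
On a directed triangle, P⃗₄-freeness makes the triangle a whole weak component; as it is not a
K₃ it has a one-way edge `x → y`, and `x`, `y` and the third vertex are colored `0, 1, 2`.
Elsewhere every edge `u → v` with `u` not a source and `v` not a sink is two-way. Sources are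
colored `0` and sinks `1`. The remaining two-way edges form stars; each star gets one hub,
colored `2`: its center, or else the end of a single two-way edge that has one-way edges both in
and out, or else an arbitrary end. Every other vertex is colored `1` or `0` according as it has a
one-way in-neighbor or not; by P⃗₄-freeness it then has no one-way out-neighbor.
-/

/-- C⃗_3^{++} on vertices 0,1,2 (standing for 1,2,3): the directed 3-cycle
(0,1),(1,2),(2,0) with extra edges (0,2) and (2,1). -/
def C3pp : Fin 3 → Fin 3 → Prop := fun i j =>
  (i, j) = (0, 1) ∨ (i, j) = (1, 2) ∨ (i, j) = (2, 0) ∨ (i, j) = (0, 2) ∨ (i, j) = (2, 1)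

namespace C3ppColoring

variable {V : Type*} {E : V → V → Prop}

theorem c3pp_iff : ∀ i j : Fin 3, C3pp i j ↔ i ≠ j ∧ ¬ (i = 1 ∧ j = 0) := by
  unfold C3pp; decide

theorem c3pp_zero_left : ∀ {j : Fin 3}, j ≠ 0 → C3pp 0 j := by unfold C3pp; decide

theorem c3pp_one_right : ∀ {i : Fin 3}, i ≠ 1 → C3pp i 1 := by unfold C3pp; decide

theorem c3pp_two_left : ∀ {j : Fin 3}, j ≠ 2 → C3pp 2 j := by unfold C3pp; decide

theorem c3pp_two_right : ∀ {i : Fin 3}, i ≠ 2 → C3pp i 2 := by unfold C3pp; decide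

/-- Together with looplessness, this says that `E` contains no directed path on four vertices. -/
def NoP4 (E : V → V → Prop) : Prop :=
  ∀ ⦃a b c d⦄, E a b → E b c → E c d → a = c ∨ a = d ∨ b = d

theorem noP4_of (hloop : ∀ v, ¬ E v v)
    (hP4 : ¬ ∃ x1 x2 x3 x4 : V, x1 ≠ x2 ∧ x1 ≠ x3 ∧ x1 ≠ x4 ∧ x2 ≠ x3 ∧ x2 ≠ x4 ∧ x3 ≠ x4 ∧
      E x1 x2 ∧ E x2 x3 ∧ E x3 x4) : NoP4 E := by
  intro a b c d hab hbc hcd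
  by_contra! h
  exact hP4 ⟨a, b, c, d, fun h => hloop a (h ▸ hab), h.1, h.2.1, fun h => hloop b (h ▸ hbc),
    h.2.2, fun h => hloop c (h ▸ hcd), hab, hbc, hcd⟩

def OnTriangle (E : V → V → Prop) (v : V) : Prop := ∃ a b, E v a ∧ E a b ∧ E b v

def closedNbhd (E : V → V → Prop) (v : V) : Set V := {w | w = v ∨ E v w ∨ E w v}

theorem closedNbhd_of_triangle (hloop : ∀ v, ¬ E v v) (hP : NoP4 E) {a b c : V}
    (hab : E a b) (hbc : E b c) (hca : E c a) : closedNbhd E a = {a, b, c} := by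
  ext t
  simp only [closedNbhd, Set.mem_ofPred_eq, Set.mem_insert_iff, Set.mem_singleton_iff]
  refine ⟨fun h => ?_, fun h => ?_⟩
  · rcases h with rfl | hat | hta
    · exact .inl rfl
    · rcases hP hbc hca hat with rfl | rfl | rfl
      · exact absurd hab (hloop b)
      · exact .inr (.inl rfl)
      · exact .inr (.inr rfl)
    · rcases hP hta hab hbc with rfl | rfl | rfl
      · exact .inr (.inl rfl)
      · exact .inr (.inr rfl)
      · exact absurd hca (hloop a)
  · rcases h with rfl | rfl | rfl
    · exact .inl rfl
    · exact .inr (.inl hab)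
    · exact .inr (.inr hca)

theorem OnTriangle.of_adj (hloop : ∀ v, ¬ E v v) (hP : NoP4 E) {u v : V} (hv : OnTriangle E v)
    (huv : E u v ∨ E v u) : OnTriangle E u := by
  obtain ⟨a, b, hva, hab, hbv⟩ := hv
  have hu : u ∈ closedNbhd E v := .inr huv.symm
  rw [closedNbhd_of_triangle hloop hP hva hab hbv] at hu
  rcases hu with rfl | rfl | rfl
  exacts [⟨a, b, hva, hab, hbv⟩, ⟨b, v, hab, hbv, hva⟩, ⟨v, a, hbv, hva, hab⟩]

open Classical in
noncomputable def pairColor (p : V × V) (v : V) : Fin 3 :=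
  if v = p.1 then 0 else if v = p.2 then 1 else 2

theorem pairColor_edge (hloop : ∀ v, ¬ E v v) {a b c p q x y : V}
    (hp : p ∈ ({a, b, c} : Set V)) (hq : q ∈ ({a, b, c} : Set V))
    (hx : x ∈ ({a, b, c} : Set V)) (hy : y ∈ ({a, b, c} : Set V))
    (hpq : E p q) (hxy : E x y) (hyx : ¬ E y x) :
    C3pp (pairColor (x, y) p) (pairColor (x, y) q) := by
  have hne : p ≠ q := fun h => hloop p (h ▸ hpq)
  simp only [Set.mem_insert_iff, Set.mem_singleton_iff] at hp hq hx hy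
  rw [c3pp_iff]
  unfold pairColor
  -- the hard case, both colored `2`, would put four distinct vertices in `{a, b, c}`
  constructor <;> split_ifs <;> grind

def IsOneWayPairIn (E : V → V → Prop) (S : Set V) (p : V × V) : Prop :=
  p.1 ∈ S ∧ p.2 ∈ S ∧ E p.1 p.2 ∧ ¬ E p.2 p.1

open Classical in
/-- The three vertices of a directed triangle have the same closed neighborhood, hence choose
the same one-way edge. -/
noncomputable def triangleColor (E : V → V → Prop) (v : V) : Fin 3 :=
  if h : ∃ p, IsOneWayPairIn E (closedNbhd E v) p then pairColor h.choose v else 2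

theorem triangleColor_edge (hloop : ∀ v, ¬ E v v) (hK3 : ¬ ∃ x y z : V, x ≠ y ∧ y ≠ z ∧ x ≠ z ∧
      E x y ∧ E y x ∧ E y z ∧ E z y ∧ E x z ∧ E z x)
    (hP : NoP4 E) {u v : V} (hu : OnTriangle E u) (huv : E u v) :
    C3pp (triangleColor E u) (triangleColor E v) := by
  obtain ⟨a, b, hua, hab, hbu⟩ := hu
  have hSu := closedNbhd_of_triangle hloop hP hua hab hbu
  have hv : v ∈ ({u, a, b} : Set V) := hSu ▸ .inr (.inl huv)
  have hSv : closedNbhd E v = closedNbhd E u := by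
    rw [hSu]
    rcases hv with rfl | rfl | rfl
    · exact absurd huv (hloop v)
    · rw [closedNbhd_of_triangle hloop hP hab hbu hua]
      ext; simp only [Set.mem_insert_iff, Set.mem_singleton_iff]; tauto
    · rw [closedNbhd_of_triangle hloop hP hbu hua hab]
      ext; simp only [Set.mem_insert_iff, Set.mem_singleton_iff]; tauto
  have hex : ∃ p, IsOneWayPairIn E (closedNbhd E u) p := by
    simp only [IsOneWayPairIn, hSu, Set.mem_insert_iff, Set.mem_singleton_iff]
    by_contra! h
    refine hK3 ⟨u, a, b, fun h => hloop u (h ▸ hua), fun h => hloop a (h ▸ hab),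
      fun h => hloop b (h ▸ hbu), hua, ?_, hab, ?_, ?_, hbu⟩
    · exact h (u, a) (.inl rfl) (.inr (.inl rfl)) hua
    · exact h (a, b) (.inr (.inl rfl)) (.inr (.inr rfl)) hab
    · exact h (b, u) (.inr (.inr rfl)) (.inl rfl) hbu
  unfold triangleColor
  rw [dif_pos hex, hSv, dif_pos hex]
  obtain ⟨hx, hy, hxy, hyx⟩ := hex.choose_spec
  exact pairColor_edge hloop (.inl rfl) hv (hSu ▸ hx) (hSu ▸ hy) huv hxy hyx

def HasOneWayIn (E : V → V → Prop) (v : V) : Prop := ∃ u, E u v ∧ ¬ E v u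

def HasOneWayOut (E : V → V → Prop) (v : V) : Prop := ∃ w, E v w ∧ ¬ E w v

def Digon (E : V → V → Prop) (u v : V) : Prop := E u v ∧ E v u

theorem Digon.symm {u v : V} (h : Digon E u v) : Digon E v u := ⟨h.2, h.1⟩

theorem digon_of_not_onTriangle (hP : NoP4 E) {u v : V} (hu : ¬ OnTriangle E u)
    (hin : ∃ x, E x u) (huv : E u v) (hout : ∃ y, E v y) : Digon E u v := by
  obtain ⟨x, hxu⟩ := hin
  obtain ⟨y, hvy⟩ := hout
  refine ⟨huv, by_contra fun hvu => ?_⟩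
  rcases hP hxu huv hvy with rfl | rfl | rfl
  exacts [hvu hxu, hu ⟨v, x, huv, hvy, hxu⟩, hvu hvy]

theorem not_hasOneWayIn_and_hasOneWayOut (hP : NoP4 E) {u v : V} (hu : ¬ OnTriangle E u)
    (huv : Digon E u v) : ¬ (HasOneWayIn E u ∧ HasOneWayOut E v) := by
  rintro ⟨⟨x, hxu, hux⟩, ⟨y, hvy, hyv⟩⟩
  rcases hP hxu huv.1 hvy with rfl | rfl | rfl
  · exact hux huv.1
  · exact hu ⟨v, x, huv.1, hvy, hxu⟩
  · exact hyv huv.1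

def StarCenter (E : V → V → Prop) (v : V) : Prop :=
  ∃ w₁ w₂, w₁ ≠ w₂ ∧ Digon E v w₁ ∧ Digon E v w₂

theorem eq_of_adj_of_digon_of_digon (hP : NoP4 E) {c l l' t : V} (hc : ¬ OnTriangle E c)
    (hl : Digon E c l) (hl' : Digon E c l') (hne : l ≠ l') (ht : E l t ∨ E t l) : t = c := by
  by_contra htc
  rcases ht with hlt | htl
  · rcases hP hl'.2 hl.1 hlt with h | h | h
    exacts [hne h.symm, hc ⟨l, l', hl.1, h ▸ hlt, hl'.2⟩, htc h.symm]
  · rcases hP htl hl.2 hl'.1 with h | h | h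
    exacts [htc h, hc ⟨l', l, hl'.1, h ▸ htl, hl.2⟩, hne h]

def Strong (E : V → V → Prop) (v : V) : Prop :=
  StarCenter E v ∨ HasOneWayIn E v ∧ HasOneWayOut E v

theorem StarCenter.not_strong_of_digon (hP : NoP4 E) {c v : V} (hc : ¬ OnTriangle E c)
    (hs : StarCenter E c) (hv : Digon E c v) : ¬ Strong E v := by
  have leaf : ∀ {t}, E v t ∨ E t v → t = c := by
    obtain ⟨w₁, w₂, hne, h₁, h₂⟩ := hs
    by_cases h : w₁ = v
    · exact eq_of_adj_of_digon_of_digon hP hc hv h₂ (fun h' => hne (h.trans h'))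
    · exact eq_of_adj_of_digon_of_digon hP hc hv h₁ (Ne.symm h)
  rintro (⟨w₁, w₂, hne, h₁, h₂⟩ | ⟨⟨x, hxv, hvx⟩, -⟩)
  · exact hne ((leaf (.inl h₁.1)).trans (leaf (.inl h₂.1)).symm)
  · exact hvx (leaf (.inr hxv) ▸ hv.2)

theorem Digon.not_strong_and_strong (hP : NoP4 E) {u v : V} (hu : ¬ OnTriangle E u)
    (hv : ¬ OnTriangle E v) (huv : Digon E u v) : ¬ (Strong E u ∧ Strong E v) := by
  rintro ⟨hsu | ⟨hiu, hou⟩, hsv⟩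
  · exact hsu.not_strong_of_digon hP hu huv hsv
  rcases hsv with hsv | ⟨hiv, hov⟩
  · exact hsv.not_strong_of_digon hP hv huv.symm (.inr ⟨hiu, hou⟩)
  · exact not_hasOneWayIn_and_hasOneWayOut hP hu huv ⟨hiu, hov⟩

theorem eq_of_digon_of_not_starCenter {v w w' : V} (hv : ¬ StarCenter E v) (hw : Digon E v w)
    (hw' : Digon E v w') : w' = w :=
  by_contra fun h => hv ⟨w', w, h, hw', hw⟩

noncomputable def pick (v w : V) : V := (Quot.out s(v, w)).1

theorem pick_comm (v w : V) : pick v w = pick w v := by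
  rw [pick, Sym2.eq_swap, ← pick]

theorem pick_eq_or_eq (v w : V) : pick v w = v ∨ pick v w = w := by
  have h : s((Quot.out s(v, w)).1, (Quot.out s(v, w)).2) = s(v, w) := Quot.out_eq _
  rw [Sym2.eq_iff] at h
  rcases h with ⟨h, -⟩ | ⟨h, -⟩
  exacts [.inl h, .inr h]

def Outranks (E : V → V → Prop) (v w : V) : Prop :=
  Strong E v ∨ ¬ Strong E w ∧ pick v w = v

def Hub (E : V → V → Prop) (v : V) : Prop := ∀ w, Digon E v w → Outranks E v w

theorem hub_of_strong {v : V} (h : Strong E v) : Hub E v := fun _ _ => .inl h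

theorem Digon.hub_iff_not_hub (hloop : ∀ v, ¬ E v v) (hP : NoP4 E) {u v : V}
    (hu : ¬ OnTriangle E u) (hv : ¬ OnTriangle E v) (huv : Digon E u v) :
    Hub E u ↔ ¬ Hub E v := by
  have hns := huv.not_strong_and_strong hP hu hv
  by_cases hsu : Strong E u
  · exact iff_of_true (hub_of_strong hsu) fun h => (h u huv.symm).elim
      (fun hsv => hns ⟨hsu, hsv⟩) fun h => h.1 hsu
  by_cases hsv : Strong E v
  · exact iff_of_false (fun h => (h v huv).elim hsu fun h => h.1 hsv)
      (not_not.2 (hub_of_strong hsv))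
  have hub_iff : ∀ {a b}, ¬ Strong E a → ¬ Strong E b → Digon E a b →
      (Hub E a ↔ pick a b = a) := fun {a b} ha hb hab =>
    ⟨fun h => ((h b hab).resolve_left ha).2, fun h w haw =>
      eq_of_digon_of_not_starCenter (fun hc => ha (.inl hc)) hab haw ▸ .inr ⟨hb, h⟩⟩
  rw [hub_iff hsu hsv huv, hub_iff hsv hsu huv.symm, pick_comm v u]
  have hne : u ≠ v := fun h => hloop u (h ▸ huv.1)
  rcases pick_eq_or_eq u v with h | h <;> simp [h, hne, hne.symm]

open Classical in
noncomputable def middleColor (E : V → V → Prop) (v : V) : Fin 3 :=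
  if Hub E v then 2 else if HasOneWayIn E v then 1 else 0

theorem middleColor_of_hub {v : V} (h : Hub E v) : middleColor E v = 2 := if_pos h

theorem middleColor_ne_zero {v : V} (h : HasOneWayIn E v) : middleColor E v ≠ 0 := by
  unfold middleColor; split_ifs <;> simp_all

theorem middleColor_ne_one {v : V} (h : HasOneWayOut E v) : middleColor E v ≠ 1 := by
  unfold middleColor
  split_ifs with hhub hin
  exacts [by decide, (hhub (hub_of_strong (.inr ⟨hin, h⟩))).elim, by decide]

theorem middleColor_ne_two {v : V} (h : ¬ Hub E v) : middleColor E v ≠ 2 := by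
  unfold middleColor; split_ifs <;> decide

open Classical in
noncomputable def color (E : V → V → Prop) (v : V) : Fin 3 :=
  if OnTriangle E v then triangleColor E v
  else if ¬ ∃ u, E u v then 0
  else if ¬ ∃ w, E v w then 1
  else middleColor E v

theorem color_edge_of_not_onTriangle (hloop : ∀ v, ¬ E v v) (hP : NoP4 E) {u v : V}
    (hu : ¬ OnTriangle E u) (hv : ¬ OnTriangle E v) (huv : E u v) :
    C3pp (color E u) (color E v) := by
  have hvin : ∃ x, E x v := ⟨u, huv⟩
  simp only [color, hu, hv, hvin, if_false, not_true_eq_false]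
  by_cases huin : ∃ x, E x u
  swap
  · rw [if_pos huin]
    refine c3pp_zero_left ?_
    split_ifs
    exacts [middleColor_ne_zero ⟨u, huv, fun hvu => huin ⟨v, hvu⟩⟩, by decide]
  have huout : ∃ y, E u y := ⟨v, huv⟩
  rw [if_neg (not_not.2 huin), if_neg (not_not.2 huout)]
  by_cases hvout : ∃ y, E v y
  swap
  · rw [if_pos hvout]
    exact c3pp_one_right (middleColor_ne_one ⟨v, huv, fun hvu => hvout ⟨u, hvu⟩⟩)
  rw [if_neg (not_not.2 hvout)]
  have hhub := (digon_of_not_onTriangle hP hu huin huv hvout).hub_iff_not_hub hloop hP hu hv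
  by_cases hhu : Hub E u
  · rw [middleColor_of_hub hhu]
    exact c3pp_two_left (middleColor_ne_two (hhub.1 hhu))
  · rw [middleColor_of_hub (not_not.1 (mt hhub.2 hhu))]
    exact c3pp_two_right (middleColor_ne_two hhu)

end C3ppColoring

open C3ppColoring

theorem stmt_7 (V : Type) (E : V → V → Prop)
    (hloop : ∀ v : V, ¬ E v v)
    (hK3 : ¬ ∃ x y z : V, x ≠ y ∧ y ≠ z ∧ x ≠ z ∧
      E x y ∧ E y x ∧ E y z ∧ E z y ∧ E x z ∧ E z x)
    (hP4 : ¬ ∃ x1 x2 x3 x4 : V, x1 ≠ x2 ∧ x1 ≠ x3 ∧ x1 ≠ x4 ∧ x2 ≠ x3 ∧ x2 ≠ x4 ∧ x3 ≠ x4 ∧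
      E x1 x2 ∧ E x2 x3 ∧ E x3 x4) :
    ∃ f : V → Fin 3, ∀ u v, E u v → C3pp (f u) (f v) := by
  have hP := noP4_of hloop hP4
  refine ⟨color E, fun u v huv => ?_⟩
  by_cases hu : OnTriangle E u
  · have hv : OnTriangle E v := hu.of_adj hloop hP (.inr huv)
    simpa only [color, hu, hv, if_true] using triangleColor_edge hloop hK3 hP hu huv
  · have hv : ¬ OnTriangle E v := fun hv => hu (hv.of_adj hloop hP (.inl huv))
    exact color_edge_of_not_onTriangle hloop hP hu hv huv
end

section
/- Let D be an oriented graph with no induced directed path on three vertices (i.e. D is P⃗_3-free), containing no tournament on four vertices, and containing a directed 3-cycle d1,d2,d3 with edges (d1,d2),(d2,d3),(d3,d1). If D is weakly connected, then every out-neighbour of d2 is an in-neighbour of d1. -/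
theorem stmt_11 (V : Type) (E : V → V → Prop)
    (hloop : ∀ v : V, ¬ E v v)
    (hor : ∀ x y : V, E x y → ¬ E y x)
    (hP3free : ¬ ∃ x y z : V, x ≠ y ∧ y ≠ z ∧ x ≠ z ∧ E x y ∧ E y z ∧ ¬ E x z ∧ ¬ E z x)
    (hT4 : ¬ ∃ a b c d : V, a ≠ b ∧ a ≠ c ∧ a ≠ d ∧ b ≠ c ∧ b ≠ d ∧ c ≠ d ∧
      (E a b ∨ E b a) ∧ (E a c ∨ E c a) ∧ (E a d ∨ E d a) ∧
      (E b c ∨ E c b) ∧ (E b d ∨ E d b) ∧ (E c d ∨ E d c))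
    (hconn : ∀ a b : V, Relation.ReflTransGen (fun x y => E x y ∨ E y x) a b)
    (d1 d2 d3 : V) (h12 : d1 ≠ d2) (h23 : d2 ≠ d3) (h31 : d3 ≠ d1)
    (e1 : E d1 d2) (e2 : E d2 d3) (e3 : E d3 d1) :
    ∀ u : V, E d2 u → E u d1 := by
  intro u hu
  by_cases h3 : u = d3
  · subst h3; exact e3
  have hud2 : u ≠ d2 := fun h => hloop d2 (h ▸ hu)
  have hud1 : u ≠ d1 := fun h => hor d1 d2 e1 (h ▸ hu)
  have adj1 : E d1 u ∨ E u d1 := by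
    by_contra h
    push_neg at h
    exact hP3free ⟨d1, d2, u, h12, fun hh => hud2 hh.symm, fun hh => hud1 hh.symm,
      e1, hu, h.1, h.2⟩
  have nadj3 : ¬ (E d3 u ∨ E u d3) := fun h =>
    hT4 ⟨d1, d2, d3, u, h12, fun hh => h31 hh.symm, fun hh => hud1 hh.symm,
      h23, fun hh => hud2 hh.symm, fun hh => h3 hh.symm,
      Or.inl e1, Or.inr e3, adj1, Or.inl e2, Or.inl hu, h⟩
  cases adj1 with
  | inl h =>
    exact absurd (⟨d3, d1, u, h31, fun hh => hud1 hh.symm, fun hh => h3 hh.symm,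
      e3, h, fun hh => nadj3 (Or.inl hh), fun hh => nadj3 (Or.inr hh)⟩ :
      ∃ x y z : V, x ≠ y ∧ y ≠ z ∧ x ≠ z ∧ E x y ∧ E y z ∧ ¬ E x z ∧ ¬ E z x) hP3free
  | inr h => exact h
end

section
/- Let D be a tournament containing neither T_4^a nor T_4^b as a subtournament, where T_4^a and T_4^b are the two tournaments on 4 vertices with exactly one directed 3-cycle each (T_4^a has a vertex dominating a directed 3-cycle, T_4^b has a vertex dominated by a directed 3-cycle). If D contains two directed 3-cycles with no common edge, then D contains a subtournament on five vertices that also contains two directed 3-cycles with no common edge. -/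
set_option maxHeartbeats 1600000

section Aux

variable {V : Type} [DecidableEq V] (E : V → V → Prop)

/-- In a 3-cycle a→b→c→a of a tournament, any E-edge between two of its vertices
is one of the three cycle edges. -/
lemma aux_mem_edge
    (htour : ∀ x y : V, x ≠ y → (E x y ↔ ¬ E y x))
    {a b c x y : V} (hab : a ≠ b) (hbc : b ≠ c) (hca : c ≠ a)
    (e1 : E a b) (e2 : E b c) (e3 : E c a)
    (hx : x = a ∨ x = b ∨ x = c) (hy : y = a ∨ y = b ∨ y = c)
    (hxy : x ≠ y) (hE : E x y) :
    (x, y) ∈ ({(a, b), (b, c), (c, a)} : Finset (V × V)) := by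
  rcases hx with rfl | rfl | rfl <;> rcases hy with rfl | rfl | rfl
  · exact absurd rfl hxy
  · simp
  · exact absurd e3 ((htour x y (Ne.symm hca)).mp hE)
  · exact absurd hE ((htour _ _ hab).mp e1)
  · exact absurd rfl hxy
  · simp
  · simp
  · exact absurd hE ((htour _ _ hbc).mp e2)
  · exact absurd rfl hxy

/-- Key lemma: a vertex outside a 3-cycle forms a 3-cycle with one of its edges. -/
lemma aux_key
    (htour : ∀ x y : V, x ≠ y → (E x y ↔ ¬ E y x))
    (hT4a : ¬ ∃ a b c d : V, a ≠ b ∧ a ≠ c ∧ a ≠ d ∧ b ≠ c ∧ b ≠ d ∧ c ≠ d ∧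
      E a b ∧ E a c ∧ E a d ∧ E b c ∧ E c d ∧ E d b)
    (hT4b : ¬ ∃ a b c d : V, a ≠ b ∧ a ≠ c ∧ a ≠ d ∧ b ≠ c ∧ b ≠ d ∧ c ≠ d ∧
      E b a ∧ E c a ∧ E d a ∧ E b c ∧ E c d ∧ E d b)
    {a b c w : V} (hab : a ≠ b) (hbc : b ≠ c) (hca : c ≠ a)
    (hwa : w ≠ a) (hwb : w ≠ b) (hwc : w ≠ c)
    (e1 : E a b) (e2 : E b c) (e3 : E c a) :
    ∃ u v : V, ((u = a ∧ v = b) ∨ (u = b ∧ v = c) ∨ (u = c ∧ v = a)) ∧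
      E w u ∧ E v w := by
  have hac : a ≠ c := hca.symm
  by_cases h1 : E w a <;> by_cases h2 : E w b <;> by_cases h3 : E w c
  · exact absurd ⟨w, a, b, c, hwa, hwb, hwc, hab, hac, hbc, h1, h2, h3, e1, e2, e3⟩ hT4a
  · exact ⟨b, c, Or.inr (Or.inl ⟨rfl, rfl⟩), h2, (htour c w hwc.symm).mpr h3⟩
  · exact ⟨a, b, Or.inl ⟨rfl, rfl⟩, h1, (htour b w hwb.symm).mpr h2⟩
  · exact ⟨a, b, Or.inl ⟨rfl, rfl⟩, h1, (htour b w hwb.symm).mpr h2⟩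
  · exact ⟨c, a, Or.inr (Or.inr ⟨rfl, rfl⟩), h3, (htour a w hwa.symm).mpr h1⟩
  · exact ⟨b, c, Or.inr (Or.inl ⟨rfl, rfl⟩), h2, (htour c w hwc.symm).mpr h3⟩
  · exact ⟨c, a, Or.inr (Or.inr ⟨rfl, rfl⟩), h3, (htour a w hwa.symm).mpr h1⟩
  · have f1 : E a w := (htour a w hwa.symm).mpr h1
    have f2 : E b w := (htour b w hwb.symm).mpr h2
    have f3 : E c w := (htour c w hwc.symm).mpr h3
    exact absurd ⟨w, a, b, c, hwa, hwb, hwc, hab, hac, hbc, f1, f2, f3, e1, e2, e3⟩ hT4b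

lemma aux_card3 {p q r : V} (h1 : p ≠ q) (h2 : p ≠ r) (h3 : q ≠ r) :
    ({p, q, r} : Finset V).card = 3 := by
  rw [Finset.card_insert_of_notMem (by simp [h1, h2]),
    Finset.card_insert_of_notMem (by simp [h3]), Finset.card_singleton]

lemma aux_card5 {p q r s t : V} (h1 : p ≠ q) (h2 : p ≠ r) (h3 : p ≠ s) (h4 : p ≠ t)
    (h5 : q ≠ r) (h6 : q ≠ s) (h7 : q ≠ t) (h8 : r ≠ s) (h9 : r ≠ t) (h10 : s ≠ t) :
    ({p, q, r, s, t} : Finset V).card = 5 := by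
  rw [Finset.card_insert_of_notMem (by simp [h1, h2, h3, h4]),
    Finset.card_insert_of_notMem (by simp [h5, h6, h7]),
    Finset.card_insert_of_notMem (by simp [h8, h9]),
    Finset.card_insert_of_notMem (by simp [h10]), Finset.card_singleton]

lemma aux_union6 {a b c a' b' c' : V} :
    ({a, b, c, a', b', c'} : Finset V) = ({a, b, c} : Finset V) ∪ {a', b', c'} := by
  ext x
  simp only [Finset.mem_insert, Finset.mem_singleton, Finset.mem_union]
  tauto

lemma aux_dedup {p q r s t : V} :
    ({p, q, r, p, s, t} : Finset V) = {p, q, r, s, t} := by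
  ext x
  simp only [Finset.mem_insert, Finset.mem_singleton]
  tauto

end Aux

theorem stmt_13 (V : Type) [DecidableEq V] (E : V → V → Prop)
    (hloop : ∀ v : V, ¬ E v v)
    (htour : ∀ x y : V, x ≠ y → (E x y ↔ ¬ E y x))
    (hT4a : ¬ ∃ a b c d : V, a ≠ b ∧ a ≠ c ∧ a ≠ d ∧ b ≠ c ∧ b ≠ d ∧ c ≠ d ∧
      E a b ∧ E a c ∧ E a d ∧ E b c ∧ E c d ∧ E d b)
    (hT4b : ¬ ∃ a b c d : V, a ≠ b ∧ a ≠ c ∧ a ≠ d ∧ b ≠ c ∧ b ≠ d ∧ c ≠ d ∧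
      E b a ∧ E c a ∧ E d a ∧ E b c ∧ E c d ∧ E d b)
    (hcycles : ∃ a b c a' b' c' : V,
      (a ≠ b ∧ b ≠ c ∧ c ≠ a ∧ E a b ∧ E b c ∧ E c a) ∧
      (a' ≠ b' ∧ b' ≠ c' ∧ c' ≠ a' ∧ E a' b' ∧ E b' c' ∧ E c' a') ∧
      Disjoint ({(a, b), (b, c), (c, a)} : Finset (V × V))
        ({(a', b'), (b', c'), (c', a')} : Finset (V × V))) :
    ∃ a b c a' b' c' : V,
      (a ≠ b ∧ b ≠ c ∧ c ≠ a ∧ E a b ∧ E b c ∧ E c a) ∧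
      (a' ≠ b' ∧ b' ≠ c' ∧ c' ≠ a' ∧ E a' b' ∧ E b' c' ∧ E c' a') ∧
      Disjoint ({(a, b), (b, c), (c, a)} : Finset (V × V))
        ({(a', b'), (b', c'), (c', a')} : Finset (V × V)) ∧
      ({a, b, c, a', b', c'} : Finset V).card = 5 := by
  obtain ⟨a, b, c, a', b', c',
    ⟨hab, hbc, hca, e1, e2, e3⟩, ⟨hab', hbc', hca', e1', e2', e3'⟩, hd⟩ := hcycles
  set I : Finset V := ({a, b, c} : Finset V) ∩ {a', b', c'} with hI
  -- the vertex sets of the two cycles share at most one vertex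
  have hIle : I.card ≤ 1 := by
    by_contra h
    push_neg at h
    obtain ⟨x, hx, y, hy, hxy⟩ := Finset.one_lt_card.mp h
    rw [hI, Finset.mem_inter] at hx hy
    obtain ⟨hx1, hx2⟩ := hx
    obtain ⟨hy1, hy2⟩ := hy
    simp only [Finset.mem_insert, Finset.mem_singleton] at hx1 hx2 hy1 hy2
    by_cases hE : E x y
    · exact Finset.disjoint_left.mp hd
        (aux_mem_edge E htour hab hbc hca e1 e2 e3 hx1 hy1 hxy hE)
        (aux_mem_edge E htour hab' hbc' hca' e1' e2' e3' hx2 hy2 hxy hE)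
    · have hE' : E y x := (htour y x hxy.symm).mpr hE
      exact Finset.disjoint_left.mp hd
        (aux_mem_edge E htour hab hbc hca e1 e2 e3 hy1 hx1 hxy.symm hE')
        (aux_mem_edge E htour hab' hbc' hca' e1' e2' e3' hy2 hx2 hxy.symm hE')
  have hunion : ({a, b, c, a', b', c'} : Finset V) = ({a, b, c} : Finset V) ∪ {a', b', c'} :=
    aux_union6
  have hcu := Finset.card_union_add_card_inter ({a, b, c} : Finset V) {a', b', c'}
  have h3 : ({a, b, c} : Finset V).card = 3 := aux_card3 hab hca.symm hbc
  have h3' : ({a', b', c'} : Finset V).card = 3 := aux_card3 hab' hca'.symm hbc'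
  rcases Nat.le_one_iff_eq_zero_or_eq_one.mp hIle with hI0 | hI1
  · -- disjoint vertex sets: use the key lemma with w = a'
    have hempty : I = ∅ := Finset.card_eq_zero.mp hI0
    have hnot : ∀ x : V, (x = a ∨ x = b ∨ x = c) → x ≠ a' ∧ x ≠ b' ∧ x ≠ c' := by
      intro x hx
      have hxI : x ∉ I := hempty ▸ Finset.notMem_empty x
      have hx1 : x ∈ ({a, b, c} : Finset V) := by
        simp only [Finset.mem_insert, Finset.mem_singleton]; exact hx
      have hx2 : x ∉ ({a', b', c'} : Finset V) := fun hm =>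
        hxI (by rw [hI]; exact Finset.mem_inter.mpr ⟨hx1, hm⟩)
      simp only [Finset.mem_insert, Finset.mem_singleton] at hx2
      push_neg at hx2
      exact hx2
    obtain ⟨haa', hab'2, hac'⟩ := hnot a (Or.inl rfl)
    obtain ⟨hba', hbb', hbc'2⟩ := hnot b (Or.inr (Or.inl rfl))
    obtain ⟨hca'2, hcb', hcc'⟩ := hnot c (Or.inr (Or.inr rfl))
    obtain ⟨u, v, hcase, ewu, evw⟩ := aux_key E htour hT4a hT4b hab hbc hca
      haa'.symm hba'.symm hca'2.symm e1 e2 e3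
    have huv : (u = a ∨ u = b ∨ u = c) ∧ (v = a ∨ v = b ∨ v = c) ∧ u ≠ v ∧ E u v := by
      rcases hcase with ⟨rfl, rfl⟩ | ⟨rfl, rfl⟩ | ⟨rfl, rfl⟩
      · exact ⟨Or.inl rfl, Or.inr (Or.inl rfl), hab, e1⟩
      · exact ⟨Or.inr (Or.inl rfl), Or.inr (Or.inr rfl), hbc, e2⟩
      · exact ⟨Or.inr (Or.inr rfl), Or.inl rfl, hca, e3⟩
    obtain ⟨hu, hv, huvne, euv⟩ := huv
    obtain ⟨hua', hub', huc'⟩ := hnot u hu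
    obtain ⟨hva', hvb', hvc'⟩ := hnot v hv
    refine ⟨a', u, v, a', b', c', ⟨hua'.symm, huvne, hva', ewu, euv, evw⟩,
      ⟨hab', hbc', hca', e1', e2', e3'⟩, ?_, ?_⟩
    · rw [Finset.disjoint_left]
      intro p hp
      simp only [Finset.mem_insert, Finset.mem_singleton] at hp
      rcases hp with rfl | rfl | rfl <;>
        simp [Prod.ext_iff, hua', hub', huc', hva', hvb', hvc', hab', Ne.symm hca']
    · rw [aux_dedup]
      exact aux_card5 hua'.symm hva'.symm hab' hca'.symm huvne hub' huc' hvb' hvc' hbc'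
  · -- exactly one common vertex: the original cycles work
    refine ⟨a, b, c, a', b', c', ⟨hab, hbc, hca, e1, e2, e3⟩,
      ⟨hab', hbc', hca', e1', e2', e3'⟩, hd, ?_⟩
    rw [hunion]
    rw [hI] at hI1
    omega
end

section
/- Let F_n be the set of tournaments on at most n+1 vertices that do not embed into TC_n. Then for n ≥ 5, the set difference F_{n-1} \ F_n consists exactly (up to isomorphism) of the transitive tournament TT_{n-1} and the tournament TC_n. -/
/-- Edge relation of TC_m on Fin m (0-indexed: TT_m with the edge from 0 to m-1 reversed). -/
def TCrel (m : ℕ) (i j : Fin m) : Prop :=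
  (i.val < j.val ∧ ¬ (i.val = 0 ∧ j.val = m - 1)) ∨ (i.val = m - 1 ∧ j.val = 0)

lemma tcrel_asymm {m : ℕ} (hm : 2 ≤ m) {i j : Fin m} (h : TCrel m i j) (h' : TCrel m j i) : False := by
  unfold TCrel at h h'; omega

lemma tcrel_irrefl {m : ℕ} (hm : 2 ≤ m) (i : Fin m) (h : TCrel m i i) : False :=
  tcrel_asymm hm h h

lemma compress {V : Type} [Fintype V] {N : ℕ} (f : V → Fin N) (hf : Function.Injective f) :
    ∃ e : V ≃ Fin (Fintype.card V), ∀ x y, f x < f y ↔ e x < e y := by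
  classical
  set s : Finset (Fin N) := Finset.univ.image f with hs
  have hcard : s.card = Fintype.card V := by
    rw [hs, Finset.card_image_of_injective _ hf, Finset.card_univ]
  let oi := s.orderIsoOfFin hcard
  have hmem : ∀ v, f v ∈ s := fun v => Finset.mem_image_of_mem f (Finset.mem_univ v)
  let g : V → Fin (Fintype.card V) := fun v => oi.symm ⟨f v, hmem v⟩
  have hginj : Function.Injective g := by
    intro a b hab
    exact hf (Subtype.ext_iff.mp (oi.symm.injective hab))
  have hgbij : Function.Bijective g :=
    (Fintype.bijective_iff_injective_and_card g).mpr ⟨hginj, by simp⟩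
  refine ⟨Equiv.ofBijective g hgbij, fun x y => ?_⟩
  show f x < f y ↔ g x < g y
  rw [show g x = oi.symm ⟨f x, hmem x⟩ from rfl, show g y = oi.symm ⟨f y, hmem y⟩ from rfl,
    oi.symm.lt_iff_lt, Subtype.mk_lt_mk]

/-- A tournament (V,E) is in F_{n-1} \ F_n iff it has at most n vertices, does not embed
into TC_{n-1}, and does embed into TC_n; this holds iff it is isomorphic to TT_{n-1}
or to TC_n. -/
theorem stmt_15 (n : ℕ) (hn : 5 ≤ n) (V : Type) [Fintype V] (E : V → V → Prop)
    (hloop : ∀ v : V, ¬ E v v)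
    (htour : ∀ x y : V, x ≠ y → (E x y ↔ ¬ E y x)) :
    (Fintype.card V ≤ n ∧
      ¬ (∃ g : V → Fin (n - 1), Function.Injective g ∧
          ∀ x y, E x y → TCrel (n - 1) (g x) (g y)) ∧
      (∃ g : V → Fin n, Function.Injective g ∧ ∀ x y, E x y → TCrel n (g x) (g y))) ↔
    ((∃ e : V ≃ Fin (n - 1), ∀ x y : V, E x y ↔ e x < e y) ∨
     (∃ e : V ≃ Fin n, ∀ x y : V, E x y ↔ TCrel n (e x) (e y))) := by
  have h2m : 2 ≤ n - 1 := by omega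
  have h2n : 2 ≤ n := by omega
  classical
  constructor
  · rintro ⟨hcard, hno, g, hginj, hg⟩
    by_cases hVn : Fintype.card V = n
    · -- |V| = n : isomorphic to TC_n
      right
      have hbij : Function.Bijective g :=
        (Fintype.bijective_iff_injective_and_card g).mpr ⟨hginj, by simp [hVn]⟩
      refine ⟨Equiv.ofBijective g hbij, fun x y => ⟨hg x y, fun h => ?_⟩⟩
      by_cases hxy : x = y
      · subst hxy; exact absurd h (fun h => tcrel_irrefl h2n _ h)
      · by_contra hE
        have hyx : E y x := by
          by_contra hyx; exact hE ((htour x y hxy).mpr hyx)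
        exact tcrel_asymm h2n h (hg y x hyx)
    · -- |V| ≤ n-1
      have hle : Fintype.card V ≤ n - 1 := by omega
      by_cases hboth : (∃ v, (g v).val = 0) ∧ (∃ v, (g v).val = n - 1)
      · -- both extremes hit: embed into TC_{n-1}, contradiction
        exfalso
        obtain ⟨⟨v0, hv0⟩, ⟨v1, hv1⟩⟩ := hboth
        have hnsurj : ¬ Function.Surjective g := by
          intro hs
          have := Fintype.card_le_of_surjective g hs
          simp at this; omega
        unfold Function.Surjective at hnsurj
        push_neg at hnsurj
        obtain ⟨k, hk⟩ := hnsurj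
        have hk0 : k.val ≠ 0 := fun h => hk v0 (Fin.ext (by omega))
        have hkl : k.val ≠ n - 1 := fun h => hk v1 (Fin.ext (by omega))
        have hkn := k.isLt
        apply hno
        refine ⟨fun v => if h : (g v).val < k.val then ⟨(g v).val, by omega⟩
          else ⟨(g v).val - 1, by have := (g v).isLt; omega⟩, ?_, ?_⟩
        · intro a b hab
          have hka : (g a).val ≠ k.val := fun h => hk a (Fin.ext h)
          have hkb : (g b).val ≠ k.val := fun h => hk b (Fin.ext h)
          apply hginj
          apply Fin.ext
          dsimp only at hab
          split_ifs at hab with hA hB hC hD <;>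
            simp only [Fin.mk.injEq] at hab <;> omega
        · intro x y hE
          have h := hg x y hE
          unfold TCrel at h ⊢
          have hkx : (g x).val ≠ k.val := fun h => hk x (Fin.ext h)
          have hky : (g y).val ≠ k.val := fun h => hk y (Fin.ext h)
          have hx := (g x).isLt
          have hy := (g y).isLt
          dsimp only
          split_ifs with hA hB hC hD <;> simp only [Fin.val_mk] <;> omega
      · -- transitive case
        have hlin : ∀ x y, E x y → (g x).val < (g y).val := by
          rw [not_and_or] at hboth
          push_neg at hboth
          intro x y hE
          have h := hg x y hE
          unfold TCrel at h
          rcases hboth with hb | hb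
          · have := hb y; have := hb x; omega
          · have := hb x; have := hb y; omega
        obtain ⟨e, he⟩ := compress g hginj
        by_cases hm : Fintype.card V = n - 1
        · left
          refine ⟨e.trans (finCongr hm), fun x y => ?_⟩
          constructor
          · intro hE
            have := (he x y).mp (by
              have := hlin x y hE
              exact (Fin.lt_iff_val_lt_val).mpr this)
            simp only [Equiv.trans_apply, finCongr_apply, Fin.lt_iff_val_lt_val,
              Fin.coe_cast] at this ⊢
            exact this
          · intro hlt
            have hxy : x ≠ y := by
              rintro rfl; exact lt_irrefl _ hlt
            by_contra hE
            have hyx : E y x := by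
              by_contra hyx; exact hE ((htour x y hxy).mpr hyx)
            have h1 := (he y x).mp ((Fin.lt_iff_val_lt_val).mpr (hlin y x hyx))
            simp only [Equiv.trans_apply, finCongr_apply, Fin.lt_iff_val_lt_val,
              Fin.coe_cast] at hlt h1
            omega
        · -- card ≤ n-2 : embeds into TC_{n-1}, contradiction
          exfalso
          have hle2 : Fintype.card V ≤ n - 2 := by omega
          apply hno
          refine ⟨fun v => ⟨(e v).val + 1, by have := (e v).isLt; omega⟩, ?_, ?_⟩
          · intro a b hab
            apply e.injective
            apply Fin.ext
            simpa [Fin.mk.injEq] using hab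
          · intro x y hE
            have h := (he x y).mp ((Fin.lt_iff_val_lt_val).mpr (hlin x y hE))
            unfold TCrel
            dsimp only
            have := Fin.lt_iff_val_lt_val.mp h
            have hex := (e x).isLt
            have hey := (e y).isLt
            omega
  · rintro (⟨e, he⟩ | ⟨e, he⟩)
    · have hcV : Fintype.card V = n - 1 := by
        rw [Fintype.card_congr e, Fintype.card_fin]
      refine ⟨by omega, ?_, ?_⟩
      · rintro ⟨g, hginj, hg⟩
        set h : Fin (n - 1) → Fin (n - 1) := fun i => g (e.symm i) with hh
        have hhinj : Function.Injective h := fun a b hab => by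
          have := hginj hab; exact e.symm.injective this
        have hpres : ∀ i j : Fin (n - 1), i < j → TCrel (n - 1) (h i) (h j) := by
          intro i j hij
          apply hg
          rw [he]
          simpa using hij
        have hhbij : Function.Bijective h :=
          (Fintype.bijective_iff_injective_and_card h).mpr ⟨hhinj, rfl⟩
        have hrefl : ∀ i j : Fin (n - 1), TCrel (n - 1) (h i) (h j) → i < j := by
          intro i j hij
          rcases lt_trichotomy i j with hlt | heq | hgt
          · exact hlt
          · subst heq; exact absurd hij (fun h' => tcrel_irrefl h2m _ h')
          · exact absurd hij (fun h' => tcrel_asymm h2m (hpres j i hgt) h')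
        set inv := (Equiv.ofBijective h hhbij).symm with hinv
        have happ : ∀ z, h (inv z) = z := fun z => (Equiv.ofBijective h hhbij).apply_symm_apply z
        set a := inv ⟨0, by omega⟩
        set b := inv ⟨1, by omega⟩
        set c := inv ⟨n - 2, by omega⟩
        have hab : a < b := by
          apply hrefl; rw [happ, happ]
          unfold TCrel; simp; omega
        have hbc : b < c := by
          apply hrefl; rw [happ, happ]
          unfold TCrel; simp; omega
        have hca : c < a := by
          apply hrefl; rw [happ, happ]
          unfold TCrel; simp; omega
        rw [Fin.lt_iff_val_lt_val] at hab hbc hca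
        omega
      · refine ⟨fun v => ⟨(e v).val + 1, by have := (e v).isLt; omega⟩, ?_, ?_⟩
        · intro x y hxy
          apply e.injective
          apply Fin.ext
          simpa [Fin.mk.injEq] using hxy
        · intro x y hE
          have := Fin.lt_iff_val_lt_val.mp ((he x y).mp hE)
          unfold TCrel
          dsimp only
          have hex := (e x).isLt
          have hey := (e y).isLt
          omega
    · have hcV : Fintype.card V = n := by
        rw [Fintype.card_congr e, Fintype.card_fin]
      refine ⟨le_of_eq hcV, ?_, e, e.injective, fun x y h => (he x y).mp h⟩
      rintro ⟨g, hginj, -⟩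
      have := Fintype.card_le_of_injective g hginj
      simp [hcV] at this
      omega
end

section
/- Let A and B be digraphs with B finite, and let C be a finite digraph with a homomorphism C → B. Then C admits a homomorphism to A if and only if C admits a homomorphism to the exponential digraph A^B. -/
/-- Edge relation of the exponential digraph A^B on functions B → A. -/
def expRel {α β : Type} (A : α → α → Prop) (B : β → β → Prop) (f g : β → α) : Prop :=
  ∀ x y, B x y → A (f x) (g y)

theorem stmt_18 (α β γ : Type) [Fintype β] [Fintype γ]
    (A : α → α → Prop) (B : β → β → Prop) (C : γ → γ → Prop)
    (hCB : ∃ f : γ → β, ∀ u v, C u v → B (f u) (f v)) :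
    (∃ f : γ → α, ∀ u v, C u v → A (f u) (f v)) ↔
      (∃ F : γ → (β → α), ∀ u v, C u v → expRel A B (F u) (F v)) := by
  obtain ⟨h, hh⟩ := hCB
  constructor
  · rintro ⟨f, hf⟩
    exact ⟨fun u _ => f u, fun u v huv _ _ _ => hf u v huv⟩
  · rintro ⟨F, hF⟩
    exact ⟨fun u => F u (h u), fun u v huv => hF u v huv (h u) (h v) (hh u v huv)⟩
end
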